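/- Let S be a nonleaf vertex of a dissection tree of G with children S' and S'' such that below(S') and below(S'') are dissected by S. Every simple path in G[below(S)] is an (S, |S|)-path; consequently the distance between any two nodes u, v in G[below(S)] equals d_{S,|S|}(u,v). -/

import Mathlib

open SimpleGraph

variable {V : Type*}

/-- The weight of a walk: the sum of the weights of its edges. -/
def walkWeight {G : SimpleGraph V} (w : Sym2 V → ℕ) {u v : V} (p : G.Walk u v) : ℕ :=
  (p.edges.map w).sum

/-- Node sets `V₁` and `V₂` are dissected by `S` in `G` if no node of `V₁ \ S`
is adjacent to a node of `V₂ \ S`. -/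
def Dissects (G : SimpleGraph V) (S V₁ V₂ : Set V) : Prop :=
  ∀ a ∈ V₁ \ S, ∀ b ∈ V₂ \ S, ¬ G.Adj a b

/-- The distance in the subgraph of `G` induced by `A`: the minimum weight of a walk
from `u` to `v` whose support lies in `A` (`⊤` if there is none). -/
noncomputable def dIn (G : SimpleGraph V) (w : Sym2 V → ℕ) (A : Set V) (u v : V) : ℕ∞ :=
  sInf {n : ℕ∞ | ∃ p : G.Walk u v, {a | a ∈ p.support} ⊆ A ∧ n = (walkWeight w p : ℕ∞)}

/-- `SWalk G B₁ B₂ k p`: the walk `p` is an `(S,k)`-path, where `B₁ = below(S')` and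
`B₂ = below(S'')` are the two sides of `S`.  An `(S,0)`-path lies entirely in one of
the two sides; an `(S,k)`-path is an `(S,k-1)`-path followed by an `(S,0)`-path. -/
inductive SWalk (G : SimpleGraph V) (B₁ B₂ : Set V) : ℕ → ∀ {u v : V}, G.Walk u v → Prop
  | zero {u v : V} (p : G.Walk u v) :
      ({a | a ∈ p.support} ⊆ B₁ ∨ {a | a ∈ p.support} ⊆ B₂) → SWalk G B₁ B₂ 0 p
  | succ {k : ℕ} {u y v : V} (q : G.Walk u y) (r : G.Walk y v) :
      SWalk G B₁ B₂ k q → ({a | a ∈ r.support} ⊆ B₁ ∨ {a | a ∈ r.support} ⊆ B₂) →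
      SWalk G B₁ B₂ (k + 1) (q.append r)

/-- `d_{S,k}(u,v)`: the minimum weight of an `(S,k)`-path between `u` and `v`. -/
noncomputable def dSk (G : SimpleGraph V) (w : Sym2 V → ℕ) (B₁ B₂ : Set V) (k : ℕ)
    (u v : V) : ℕ∞ :=
  sInf {n : ℕ∞ | ∃ p : G.Walk u v, SWalk G B₁ B₂ k p ∧ n = (walkWeight w p : ℕ∞)}


/-! A walk in `B₁ ∪ B₂` can leave the side it is on only across an edge `yv` with `y` on
both sides and `v` on one side only; since `S` dissects the sides, `y ∈ S`. Hence the
number of side switches is at most the number of visits to `S` before the last node, which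
for a path is at most `|S|`. For the distances, shortcutting a walk to a path (`bypass`)
keeps it inside `B₁ ∪ B₂` and does not increase its weight. -/

variable {G : SimpleGraph V} {S B₁ B₂ V₁ V₂ : Set V}

theorem Dissects.symm (h : Dissects G S V₁ V₂) : Dissects G S V₂ V₁ :=
  fun a ha b hb hab => h b hb a ha hab.symm

theorem Dissects.cond (h : Dissects G S B₁ B₂) (i : Bool) :
    Dissects G S (cond i B₁ B₂) (cond (!i) B₁ B₂) := by
  cases i
  exacts [h.symm, h]

theorem Dissects.mem_of_adj (h : Dissects G S V₁ V₂) {a b : V} (ha : a ∈ V₁) (hb : b ∈ V₂)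
    (hbS : b ∉ S) (hab : G.Adj a b) : a ∈ S := by
  by_contra haS
  exact h a ⟨ha, haS⟩ b ⟨hb, hbS⟩ hab

theorem subset_cond_of_subset_inter (hS : S ⊆ B₁ ∩ B₂) (i : Bool) : S ⊆ cond i B₁ B₂ := by
  cases i
  exacts [hS.trans Set.inter_subset_right, hS.trans Set.inter_subset_left]

theorem exists_mem_cond_of_mem_union {a : V} (ha : a ∈ B₁ ∪ B₂) : ∃ i, a ∈ cond i B₁ B₂ :=
  ha.elim (fun h => ⟨true, h⟩) (fun h => ⟨false, h⟩)

theorem mem_cond_not_of_mem_union {a : V} {i : Bool} (ha : a ∈ B₁ ∪ B₂)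
    (hi : a ∉ cond i B₁ B₂) : a ∈ cond (!i) B₁ B₂ := by
  cases i <;> simp_all

theorem SWalk.support_subset {k : ℕ} {u v : V} {p : G.Walk u v} (h : SWalk G B₁ B₂ k p) :
    {a | a ∈ p.support} ⊆ B₁ ∪ B₂ := by
  induction h with
  | zero p hp => exact hp.elim (·.trans Set.subset_union_left) (·.trans Set.subset_union_right)
  | succ q r _ hr ih =>
    intro a ha
    rcases Walk.mem_support_append_iff q r |>.mp ha with ha | ha
    · exact ih ha
    · exact hr.elim (fun h => Or.inl (h ha)) (fun h => Or.inr (h ha))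

theorem SWalk.succ_self {k : ℕ} {u v : V} {p : G.Walk u v} (h : SWalk G B₁ B₂ k p) :
    SWalk G B₁ B₂ (k + 1) p := by
  have hv : v ∈ B₁ ∪ B₂ := h.support_subset p.end_mem_support
  simpa using SWalk.succ p Walk.nil h (by simpa using hv)

theorem SWalk.mono {k m : ℕ} (hkm : k ≤ m) {u v : V} {p : G.Walk u v}
    (h : SWalk G B₁ B₂ k p) : SWalk G B₁ B₂ m p := by
  induction hkm with
  | refl => exact h
  | step _ ih => exact ih.succ_self

/-- `SWalkLast G B₁ B₂ k i p`: an `(S,k)`-path whose last piece lies in the side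
`cond i B₁ B₂`. -/
inductive SWalkLast (G : SimpleGraph V) (B₁ B₂ : Set V) :
    ℕ → Bool → ∀ {u v : V}, G.Walk u v → Prop
  | zero {u v : V} (i : Bool) (p : G.Walk u v) :
      {a | a ∈ p.support} ⊆ cond i B₁ B₂ → SWalkLast G B₁ B₂ 0 i p
  | succ {k : ℕ} {i : Bool} {u y v : V} (j : Bool) (q : G.Walk u y) (r : G.Walk y v) :
      SWalkLast G B₁ B₂ k i q → {a | a ∈ r.support} ⊆ cond j B₁ B₂ →
      SWalkLast G B₁ B₂ (k + 1) j (q.append r)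

namespace SWalkLast

theorem toSWalk {k : ℕ} {i : Bool} {u v : V} {p : G.Walk u v}
    (h : SWalkLast G B₁ B₂ k i p) : SWalk G B₁ B₂ k p := by
  have side {s : Set V} {j : Bool} (hs : s ⊆ cond j B₁ B₂) : s ⊆ B₁ ∨ s ⊆ B₂ := by
    cases j
    exacts [Or.inr hs, Or.inl hs]
  induction h with
  | zero i p hp => exact .zero p (side hp)
  | succ j q r _ hr ih => exact .succ q r ih (side hr)

theorem end_mem {k : ℕ} {i : Bool} {u v : V} {p : G.Walk u v}
    (h : SWalkLast G B₁ B₂ k i p) : v ∈ cond i B₁ B₂ := by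
  cases h with
  | zero i p hp => exact hp p.end_mem_support
  | succ j q r _ hr => exact hr r.end_mem_support

theorem concat {k : ℕ} {i : Bool} {u y v : V} {p : G.Walk u y}
    (hp : SWalkLast G B₁ B₂ k i p) (h : G.Adj y v) (hv : v ∈ cond i B₁ B₂) :
    SWalkLast G B₁ B₂ k i (p.concat h) := by
  have extend {x : V} (r : G.Walk x y) (hr : {a | a ∈ r.support} ⊆ cond i B₁ B₂) :
      {a | a ∈ (r.concat h).support} ⊆ cond i B₁ B₂ := by
    intro a ha
    rcases List.mem_append.mp (r.support_concat h ▸ ha) with ha | ha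
    · exact hr ha
    · exact List.mem_singleton.mp ha ▸ hv
  cases hp with
  | zero i p hp => exact .zero i _ (extend p hp)
  | succ j q r hq hr =>
    rw [Walk.concat_eq_append, ← Walk.append_assoc, ← Walk.concat_eq_append]
    exact .succ i q _ hq (extend r hr)

end SWalkLast

theorem exists_sWalkLast_le_countP [DecidablePred (· ∈ S)] (hS : S ⊆ B₁ ∩ B₂)
    (hdis : Dissects G S B₁ B₂) {u v : V} (p : G.Walk u v)
    (hp : {a | a ∈ p.support} ⊆ B₁ ∪ B₂) :
    ∃ k i, SWalkLast G B₁ B₂ k i p ∧ k ≤ p.support.dropLast.countP (· ∈ S) := by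
  induction p using Walk.concatRec with
  | Hnil =>
    obtain ⟨i, hi⟩ := exists_mem_cond_of_mem_union (hp (List.mem_singleton_self _))
    exact ⟨0, i, .zero i _ (by simpa using hi), le_rfl⟩
  | @Hconcat u y v q h ih =>
    rw [Walk.support_concat] at hp
    have hq : {a | a ∈ q.support} ⊆ B₁ ∪ B₂ := fun a ha => hp (List.mem_append_left _ ha)
    have hv : v ∈ B₁ ∪ B₂ := hp (List.mem_append_right _ (List.mem_singleton_self v))
    obtain ⟨k, i, hqk, hk⟩ := ih hq
    rw [Walk.support_concat, List.dropLast_concat]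
    by_cases hvi : v ∈ cond i B₁ B₂
    · exact ⟨k, i, hqk.concat h hvi, hk.trans (List.dropLast_sublist _).countP_le⟩
    have hv' := mem_cond_not_of_mem_union hv hvi
    have hyS : y ∈ S := (hdis.cond i).mem_of_adj hqk.end_mem hv'
      (fun hvS => hvi (subset_cond_of_subset_inter hS i hvS)) h
    have hedge : {a | a ∈ (Walk.cons h Walk.nil).support} ⊆ cond (!i) B₁ B₂ := by
      intro a ha
      rcases List.mem_pair.mp ha with rfl | rfl
      exacts [subset_cond_of_subset_inter hS _ hyS, hv']
    refine ⟨k + 1, !i, Walk.concat_eq_append q h ▸ .succ (!i) q _ hqk hedge, ?_⟩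
    rw [← Walk.dropLast_support_concat q, List.countP_append]
    simp [hyS, hk]

theorem countP_le_ncard [DecidablePred (· ∈ S)] (hS : S.Finite) {l : List V} (hl : l.Nodup) :
    l.countP (· ∈ S) ≤ S.ncard := by
  classical
  rw [List.countP_eq_length_filter, ← List.toFinset_card_of_nodup (hl.filter _),
    ← Set.ncard_coe_finset]
  exact Set.ncard_le_ncard (by intro a; simp) hS

theorem walkWeight_bypass_le [DecidableEq V] (w : Sym2 V → ℕ) {u v : V} (p : G.Walk u v) :
    walkWeight w p.bypass ≤ walkWeight w p :=
  ((p.edges_bypass_sublist_edges).map w).sum_le_sum fun _ _ => Nat.zero_le _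

/-- Let `S` be a nonleaf vertex of a dissection tree of `G` with
children `S'`, `S''`, where `B₁ = below(S')` and `B₂ = below(S'')` are dissected by
`S` (so `below(S) = B₁ ∪ B₂`).  Every simple path in `G[below(S)]` is an
`(S,|S|)`-path; consequently the distance between any two nodes `u, v` in
`G[below(S)]` equals `d_{S,|S|}(u,v)`. -/
theorem isPath_sWalk_card {V : Type*} (G : SimpleGraph V) (w : Sym2 V → ℕ)
    (S B₁ B₂ : Set V) (hS : S ⊆ B₁ ∩ B₂) (hdis : Dissects G S B₁ B₂)
    (hfin : S.Finite) :
    (∀ (u v : V) (p : G.Walk u v), p.IsPath → {a | a ∈ p.support} ⊆ B₁ ∪ B₂ →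
      SWalk G B₁ B₂ S.ncard p) ∧
    (∀ u v : V, dIn G w (B₁ ∪ B₂) u v = dSk G w B₁ B₂ S.ncard u v) := by
  classical
  have hpath (u v : V) (p : G.Walk u v) (hp : p.IsPath) (hsub : {a | a ∈ p.support} ⊆ B₁ ∪ B₂) :
      SWalk G B₁ B₂ S.ncard p := by
    obtain ⟨k, i, hk, hle⟩ := exists_sWalkLast_le_countP hS hdis p hsub
    exact hk.toSWalk.mono <|
      hle.trans (countP_le_ncard hfin (hp.support_nodup.sublist (List.dropLast_sublist _)))
  refine ⟨hpath, fun u v => le_antisymm ?_ ?_⟩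
  · refine sInf_le_sInf ?_
    rintro n ⟨p, hp, rfl⟩
    exact ⟨p, hp.support_subset, rfl⟩
  · refine sInf_le_sInf_of_isCoinitialFor ?_
    rintro n ⟨p, hsub, rfl⟩
    refine ⟨_, ⟨p.bypass, hpath u v _ p.bypass_isPath
      (fun a ha => hsub (p.support_bypass_subset_support ha)), rfl⟩, ?_⟩
    exact_mod_cast walkWeight_bypass_le w p
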